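/- arXiv:2603.08085 — 2 statements merged into one kernel-verified Lean document; each statement's English description precedes it below -/
import Mathlib

section
/- Let (G, H, σ) be a quandle triplet, Ĝ = G ⋊_σ ℤ, Ĥ = H ⋊_σ ℤ, and σ̂(g,m) = (σ(g),m). Then (Ĝ, Ĥ, σ̂) is a quandle triplet, and the map η : Q(G,H,σ) → Q(Ĝ,Ĥ,σ̂) sending Hg ↦ Ĥ(g,1) is a quandle isomorphism. -/
/-- The underlying set of the semidirect product `G ⋊_σ ℤ`, with multiplication
`(g,m)·(h,n) = (σⁿ(g) h, m + n)`. -/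
def Hat (G : Type*) [Group G] (σ : MulAut G) : Type _ := G × ℤ

namespace Hat

variable {G : Type*} [Group G] (σ : MulAut G)

/-- The element `(g, n)` of `G ⋊_σ ℤ`. -/
def mk (g : G) (n : ℤ) : Hat G σ := (g, n)

instance : Group (Hat G σ) where
  mul x y := ((σ ^ y.2) x.1 * y.1, x.2 + y.2)
  one := ((1 : G), (0 : ℤ))
  inv x := ((σ ^ (-x.2)) x.1⁻¹, -x.2)
  mul_assoc x y z := by
    show (Prod.mk ((σ ^ z.2) ((σ ^ y.2) x.1 * y.1) * z.1) (x.2 + y.2 + z.2) : G × ℤ) =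
      ((σ ^ (y.2 + z.2)) x.1 * ((σ ^ z.2) y.1 * z.1), x.2 + (y.2 + z.2))
    have : (σ ^ (y.2 + z.2)) x.1 = (σ ^ z.2) ((σ ^ y.2) x.1) := by
      rw [add_comm, zpow_add, MulAut.mul_apply]
    simp [this, map_mul, mul_assoc, add_assoc]
  one_mul x := by
    show (Prod.mk ((σ ^ x.2) 1 * x.1) (0 + x.2) : G × ℤ) = x
    simp
    rfl
  mul_one x := by
    show (Prod.mk ((σ ^ (0 : ℤ)) x.1 * 1) (x.2 + 0) : G × ℤ) = x
    simp
    rfl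
  inv_mul_cancel x := by
    show (Prod.mk ((σ ^ x.2) ((σ ^ (-x.2)) x.1⁻¹) * x.1) (-x.2 + x.2) : G × ℤ) =
      ((1 : G), (0 : ℤ))
    have : (σ ^ x.2) ((σ ^ (-x.2)) x.1⁻¹) = x.1⁻¹ := by
      rw [← MulAut.mul_apply, ← zpow_add, add_neg_cancel, zpow_zero, MulAut.one_apply]
    simp [this]

end Hat

/-! Since `Ĥ` contains every `(1, n)`, right `Ĥ`-cosets in `Ĝ` forget the `ℤ`-coordinate:
`(b, n)(a, m)⁻¹ = (σ⁻ᵐ(b a⁻¹), n - m)` lies in `Ĥ` iff `b a⁻¹ ∈ H`, because `σ` fixes `H`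
pointwise. Hence `Hg ↦ Ĥ(g, 1)` is well defined and bijective, and it respects the coset quandle
operations because `σ̂((g, 1)(h, 1)⁻¹)(h, 1) = (σ(g h⁻¹) h, 1)` already holds in `Ĝ`. -/

theorem Quotient.map_bijective_of_iff {α β : Sort*} {sa : Setoid α} {sb : Setoid β}
    {f : α → β} (hf : ∀ a b, f a ≈ f b ↔ a ≈ b) (hsurj : ∀ y, ∃ x, f x ≈ y) :
    Function.Bijective (Quotient.map f fun a b => (hf a b).2) := by
  refine ⟨fun x y => ?_, fun y => ?_⟩
  · induction x, y using Quotient.ind₂ with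
    | _ a b => exact fun h => Quotient.sound ((hf a b).1 (Quotient.exact h))
  · induction y using Quotient.ind with
    | _ y =>
      obtain ⟨x, hx⟩ := hsurj y
      exact ⟨⟦x⟧, Quotient.sound hx⟩

namespace MulAut

variable {G : Type*} [Group G] {σ : MulAut G}

theorem zpow_apply_eq_self {g : G} (hg : σ g = g) (n : ℤ) : (σ ^ n) g = g :=
  MulAction.mem_fixedBy_zpow (α := G) (g := σ) hg n

theorem zpow_apply_mem_iff {H : Subgroup G} (hH : ∀ h ∈ H, σ h = h) (n : ℤ) (g : G) :
    (σ ^ n) g ∈ H ↔ g ∈ H := by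
  refine ⟨fun hg => ?_, fun hg => (zpow_apply_eq_self (hH g hg) n).symm ▸ hg⟩
  rwa [← zpow_apply_eq_self (hH _ hg) (-n), zpow_neg, MulAut.inv_apply_self] at hg

end MulAut

namespace Hat

variable {G : Type*} [Group G] {σ : MulAut G}

theorem mk_mul_mk (g h : G) (m n : ℤ) :
    mk σ g m * mk σ h n = mk σ ((σ ^ n) g * h) (m + n) := rfl

theorem inv_mk (g : G) (n : ℤ) : (mk σ g n)⁻¹ = mk σ ((σ ^ (-n)) g⁻¹) (-n) := rfl

theorem mk_mul_inv_mk (a b : G) (m n : ℤ) :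
    mk σ b n * (mk σ a m)⁻¹ = mk σ ((σ ^ (-m)) (b * a⁻¹)) (n - m) := by
  rw [inv_mk, mk_mul_mk, map_mul, sub_eq_add_neg]

variable (σ) in
/-- `Ĥ = H ⋊_σ ℤ`. -/
def subgroup (H : Subgroup G) (hH : ∀ h ∈ H, σ h = h) : Subgroup (Hat G σ) where
  carrier := {x | x.1 ∈ H}
  mul_mem' {x y} hx hy := by
    show (σ ^ y.2) x.1 * y.1 ∈ H
    exact mul_mem ((MulAut.zpow_apply_mem_iff hH _ _).2 hx) hy
  one_mem' := H.one_mem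
  inv_mem' {x} hx := by
    show (σ ^ (-x.2)) x.1⁻¹ ∈ H
    exact (MulAut.zpow_apply_mem_iff hH _ _).2 (inv_mem hx)

theorem mk_mem_subgroup {H : Subgroup G} (hH : ∀ h ∈ H, σ h = h) (g : G) (n : ℤ) :
    mk σ g n ∈ subgroup σ H hH ↔ g ∈ H := Iff.rfl

theorem rightRel_mk_iff {H : Subgroup G} (hH : ∀ h ∈ H, σ h = h) (a b : G) (m n : ℤ) :
    QuotientGroup.rightRel (subgroup σ H hH) (mk σ a m) (mk σ b n) ↔
      QuotientGroup.rightRel H a b := by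
  rw [QuotientGroup.rightRel_apply, QuotientGroup.rightRel_apply, mk_mul_inv_mk,
    mk_mem_subgroup, MulAut.zpow_apply_mem_iff hH]

/-- For `τ = σ` this is `σ̂`. -/
def mapAut (τ : MulAut G) (hτ : Commute τ σ) : Hat G σ ≃* Hat G σ where
  toFun x := mk σ (τ x.1) x.2
  invFun x := mk σ (τ⁻¹ x.1) x.2
  left_inv x := by
    show mk σ (τ⁻¹ (τ x.1)) x.2 = x
    rw [MulAut.inv_apply_self]
    rfl
  right_inv x := by
    show mk σ (τ (τ⁻¹ x.1)) x.2 = x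
    rw [MulAut.apply_inv_self]
    rfl
  map_mul' x y := by
    show mk σ (τ ((σ ^ y.2) x.1 * y.1)) (x.2 + y.2) = mk σ ((σ ^ y.2) (τ x.1) * τ y.1) (x.2 + y.2)
    rw [map_mul, ← MulAut.mul_apply, (hτ.zpow_right y.2).eq, MulAut.mul_apply]

theorem mapAut_mk (τ : MulAut G) (hτ : Commute τ σ) (g : G) (n : ℤ) :
    mapAut τ hτ (mk σ g n) = mk σ (τ g) n := rfl

theorem mapAut_eq_self_of_mem {H : Subgroup G} (hH : ∀ h ∈ H, σ h = h) {τ : MulAut G}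
    (hτ : Commute τ σ) (hτH : ∀ h ∈ H, τ h = h) {x : Hat G σ} (hx : x ∈ subgroup σ H hH) :
    mapAut τ hτ x = x := by
  show mk σ (τ x.1) x.2 = x
  rw [hτH _ hx]
  rfl

theorem mapAut_self_mk_mul_inv_mk_mul_mk (g h : G) :
    mapAut σ (Commute.refl σ) (mk σ g 1 * (mk σ h 1)⁻¹) * mk σ h 1 = mk σ (σ (g * h⁻¹) * h) 1 := by
  rw [mk_mul_inv_mk, mapAut_mk, mk_mul_mk, zpow_neg_one, MulAut.apply_inv_self, zpow_one,
    sub_self, zero_add]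

variable (σ) in
/-- The map `η : Hg ↦ Ĥ(g, 1)`. -/
def quotientMap (H : Subgroup G) (hH : ∀ h ∈ H, σ h = h) :
    Quotient (QuotientGroup.rightRel H) → Quotient (QuotientGroup.rightRel (subgroup σ H hH)) :=
  Quotient.map (fun g => mk σ g 1) fun a b => (rightRel_mk_iff hH a b 1 1).2

theorem quotientMap_bijective (H : Subgroup G) (hH : ∀ h ∈ H, σ h = h) :
    Function.Bijective (quotientMap σ H hH) :=
  Quotient.map_bijective_of_iff (fun a b => rightRel_mk_iff hH a b 1 1)
    fun y => ⟨y.1, (rightRel_mk_iff hH y.1 y.1 1 y.2).2 ((QuotientGroup.rightRel H).refl' _)⟩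

end Hat

/-- Let `(G,H,σ)` be a quandle triplet, `Ĝ = G ⋊_σ ℤ`, `Ĥ = H ⋊_σ ℤ`, and
`σ̂(g,m) = (σ(g),m)`.  Then `(Ĝ,Ĥ,σ̂)` is a quandle triplet and the map
`η : Q(G,H,σ) → Q(Ĝ,Ĥ,σ̂)`, `Hg ↦ Ĥ(g,1)`, is a quandle isomorphism. -/
theorem hat_triplet_and_eta_iso {G : Type*} [Group G]
    (H : Subgroup G) (σ : MulAut G) (hfix : ∀ h ∈ H, σ h = h) :
    ∃ Hhat : Subgroup (Hat G σ),
      (∀ (g : G) (n : ℤ), Hat.mk σ g n ∈ Hhat ↔ g ∈ H) ∧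
      ∃ σhat : Hat G σ ≃* Hat G σ,
        (∀ (g : G) (m : ℤ), σhat (Hat.mk σ g m) = Hat.mk σ (σ g) m) ∧
        -- (Ĝ, Ĥ, σ̂) is a quandle triplet: σ̂ fixes Ĥ pointwise
        (∀ x ∈ Hhat, σhat x = x) ∧
        ∃ η : Quotient (QuotientGroup.rightRel H) →
            Quotient (QuotientGroup.rightRel Hhat),
          (∀ g : G, η (Quotient.mk _ g) = Quotient.mk _ (Hat.mk σ g 1)) ∧
          Function.Bijective η ∧
          -- η is a quandle homomorphism for the coset quandle operations
          (∀ g h : G,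
            η (Quotient.mk _ (σ (g * h⁻¹) * h)) =
              Quotient.mk _ (σhat (Hat.mk σ g 1 * (Hat.mk σ h 1)⁻¹) * Hat.mk σ h 1)) :=
  ⟨Hat.subgroup σ H hfix, Hat.mk_mem_subgroup hfix, Hat.mapAut σ (Commute.refl σ),
    Hat.mapAut_mk σ _, fun _ => Hat.mapAut_eq_self_of_mem hfix _ hfix,
    Hat.quotientMap σ H hfix, fun _ => rfl, Hat.quotientMap_bijective H hfix,
    fun g h => congrArg _ (Hat.mapAut_self_mk_mul_inv_mk_mul_mk g h).symm⟩
end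

section
/- Let G be a group, G̃ = (G × G) ⋊ ℤ/2 where the nontrivial element of ℤ/2 acts on G × G by swapping coordinates. Then the map f_B : Core(G) → Conj(G̃), g ↦ (g, g⁻¹, −1), is an injective quandle homomorphism: f_B(h g⁻¹ h) = f_B(h)⁻¹ f_B(g) f_B(h), and f_B is injective. -/
/-- The swap action of `{±1}` on `G × G`: `1` acts trivially, `-1` swaps. -/
def sw {G : Type*} (a : ℤˣ) (p : G × G) : G × G :=
  if a = 1 then p else (p.2, p.1)

/-- The underlying set of `G̃ = (G × G) ⋊_Sw {±1}`, with multiplication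
`(x, a)·(y, b) = (Sw(b)(x) · y, a b)`; explicitly
`(g₁,h₁,a)(g₂,h₂,b) = (g₁g₂, h₁h₂, ab)` if `b = 1` and `(h₁g₂, g₁h₂, ab)` if `b = -1`. -/
def Tilde (G : Type*) : Type _ := (G × G) × ℤˣ

namespace Tilde

variable {G : Type*} [Group G]

/-- The element `(g, h, a)` of `G̃`. -/
def mk (g h : G) (a : ℤˣ) : Tilde G := ((g, h), a)

theorem sw_mul {a : ℤˣ} (p q : G × G) : sw a (p * q) = sw a p * sw a q := by
  rcases Int.units_eq_one_or a with h | h <;> simp [sw, h]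

theorem sw_sw {a b : ℤˣ} (p : G × G) : sw a (sw b p) = sw (a * b) p := by
  rcases Int.units_eq_one_or a with h | h <;>
    rcases Int.units_eq_one_or b with h' | h' <;> simp [sw, h, h']

theorem sw_inv {a : ℤˣ} (p : G × G) : sw a p⁻¹ = (sw a p)⁻¹ := by
  rcases Int.units_eq_one_or a with h | h <;> simp [sw, h]

instance : Group (Tilde G) where
  mul x y := (sw y.2 x.1 * y.1, x.2 * y.2)
  one := ((1, 1), 1)
  inv x := (sw x.2 x.1⁻¹, x.2⁻¹)
  mul_assoc x y z := by
    show (Prod.mk (sw z.2 (sw y.2 x.1 * y.1) * z.1) (x.2 * y.2 * z.2) : (G × G) × ℤˣ) =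
      (sw (y.2 * z.2) x.1 * (sw z.2 y.1 * z.1), x.2 * (y.2 * z.2))
    rw [sw_mul, sw_sw, mul_comm z.2 y.2]
    simp [mul_assoc]
  one_mul x := by
    obtain ⟨p, a⟩ := x
    show (Prod.mk (sw a (1, 1) * p) ((1 : ℤˣ) * a) : (G × G) × ℤˣ) = (p, a)
    rcases Int.units_eq_one_or a with h | h <;> simp [sw, h]
  mul_one x := by
    obtain ⟨p, a⟩ := x
    show (Prod.mk (sw (1 : ℤˣ) p * (1, 1)) (a * 1) : (G × G) × ℤˣ) = (p, a)
    simp [sw]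
  inv_mul_cancel x := by
    obtain ⟨p, a⟩ := x
    show (Prod.mk (sw a (sw a p⁻¹) * p) (a⁻¹ * a) : (G × G) × ℤˣ) = ((1, 1), 1)
    rw [sw_sw]
    rcases Int.units_eq_one_or a with h | h <;> simp [sw, h] <;> rfl

end Tilde

namespace Tilde

theorem mk_inj {G : Type*} {g h g' h' : G} {a a' : ℤˣ} :
    mk g h a = mk g' h' a' ↔ g = g' ∧ h = h' ∧ a = a' := by
  show ((g, h), a) = ((g', h'), a') ↔ _
  simp [and_assoc]

variable {G : Type*} [Group G]

theorem mk_mul_mk_neg_one (g₁ h₁ g₂ h₂ : G) (a : ℤˣ) :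
    mk g₁ h₁ a * mk g₂ h₂ (-1) = mk (h₁ * g₂) (g₁ * h₂) (-a) := by
  show (sw (-1 : ℤˣ) (g₁, h₁) * (g₂, h₂), a * -1) = ((h₁ * g₂, g₁ * h₂), -a)
  simp [sw]

theorem inv_mk_neg_one (g h : G) : (mk g h (-1))⁻¹ = mk h⁻¹ g⁻¹ (-1) := by
  show (sw (-1 : ℤˣ) (g, h)⁻¹, (-1 : ℤˣ)⁻¹) = ((h⁻¹, g⁻¹), -1)
  simp [sw]

end Tilde

/-- Bergman's embedding: the map `f_B : Core(G) → Conj(G̃)`, `g ↦ (g, g⁻¹, −1)`,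
is an injective quandle homomorphism: `f_B(h g⁻¹ h) = f_B(h)⁻¹ f_B(g) f_B(h)`,
and `f_B` is injective. -/
theorem bergman_embedding {G : Type*} [Group G] :
    (∀ g h : G,
      Tilde.mk (h * g⁻¹ * h) (h * g⁻¹ * h)⁻¹ (-1) =
        (Tilde.mk h h⁻¹ (-1))⁻¹ * Tilde.mk g g⁻¹ (-1) * Tilde.mk h h⁻¹ (-1)) ∧
    Function.Injective (fun g : G => Tilde.mk g g⁻¹ (-1)) := by
  refine ⟨fun g h => ?_, fun g g' e => (Tilde.mk_inj.1 e).1⟩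
  rw [Tilde.inv_mk_neg_one, inv_inv, Tilde.mk_mul_mk_neg_one, Tilde.mk_mul_mk_neg_one]
  simp [mul_assoc]
end
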